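/- arXiv:2410.20846 — 5 statements merged into one kernel-verified Lean document; each statement's English description precedes it below -/
import Mathlib

section
/- Let F=(f₁,…,fₙ):ℝⁿ→ℝⁿ be a polynomial map satisfying F(0)=0 and det DF(x)≠0 for all x∈ℝⁿ, let H(x)=‖F(x)‖₂²/2, and let Y=(−∂H/∂x₁,…,−∂H/∂xₙ). Let s=(s₁,…,sₙ) be a weight vector of positive integers and H_s the higher s-quasi-homogeneous term of H. If the gradient ∂ₓH_s=(∂H_s/∂x₁,…,∂H_s/∂xₙ) vanishes only at the origin in ℝⁿ, then no partial derivative ∂H_s/∂xᵢ is the zero polynomial, the higher s-quasi-homogeneous part of the vector field Y equals (−∂H_s/∂x₁,…,−∂H_s/∂xₙ), and in particular the higher s-quasi-homogeneous part of Y vanishes only at the origin in ℝⁿ. -/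
/-!
Since `F(0) = 0`, `H` has no linear terms, so `∇H_s` vanishes at the origin. If `∂H_s/∂xᵢ` were
zero, then `∇H_s` would not depend on `xᵢ` (partial derivatives commute) and would also vanish at
`eᵢ ≠ 0`. Once `∂H_s/∂xᵢ ≠ 0`, it is the top weighted component of `∂H/∂xᵢ`: differentiation in
`xᵢ` lowers every weighted degree by exactly `sᵢ`, mapping the component of degree `ℓ + sᵢ` onto
the component of degree `ℓ`.
-/

open MvPolynomial Filter

noncomputable def evalMap {n : ℕ} (F : Fin n → MvPolynomial (Fin n) ℝ) (x : Fin n → ℝ) :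
    Fin n → ℝ := fun i => eval x (F i)

noncomputable def jacDet {n : ℕ} (F : Fin n → MvPolynomial (Fin n) ℝ) (x : Fin n → ℝ) : ℝ :=
  Matrix.det (Matrix.of fun i j => eval x (pderiv j (F i)))

/-- The higher `s`-quasi-homogeneous term of a polynomial. -/
noncomputable def higherPart {n : ℕ} (s : Fin n → ℕ) (P : MvPolynomial (Fin n) ℝ) :
    MvPolynomial (Fin n) ℝ :=
  weightedHomogeneousComponent s (weightedTotalDegree s P) P

/-- The polynomial `H = ‖F‖₂²/2 = (f₁² + ⋯ + fₙ²)/2`. -/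
noncomputable def polyH {n : ℕ} (F : Fin n → MvPolynomial (Fin n) ℝ) :
    MvPolynomial (Fin n) ℝ :=
  C (1 / 2 : ℝ) * ∑ i, F i ^ 2

/-- The gradient vector field `Y = (-∂H/∂x₁, …, -∂H/∂xₙ)` as a tuple of polynomials. -/
noncomputable def gradField {n : ℕ} (F : Fin n → MvPolynomial (Fin n) ℝ) :
    Fin n → MvPolynomial (Fin n) ℝ :=
  fun i => - pderiv i (polyH F)

namespace MvPolynomial

section PDeriv

variable {σ R : Type*} [CommSemiring R]

theorem constantCoeff_pderiv (i : σ) (p : MvPolynomial σ R) :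
    constantCoeff (pderiv i p) = coeff (Finsupp.single i 1) p := by
  simp [constantCoeff_eq, coeff_pderiv]

theorem pderiv_comm (i j : σ) (p : MvPolynomial σ R) :
    pderiv i (pderiv j p) = pderiv j (pderiv i p) := by
  ext m
  simp only [coeff_pderiv, add_right_comm m]
  rcases eq_or_ne i j with rfl | hij
  · rfl
  · simp only [Finsupp.add_apply, Finsupp.single_eq_of_ne hij, Finsupp.single_eq_of_ne hij.symm,
      add_zero]
    ring

theorem notMem_vars_of_pderiv_eq_zero [NoZeroDivisors R] [CharZero R] {i : σ}
    {p : MvPolynomial σ R} (h : pderiv i p = 0) : i ∉ p.vars := by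
  intro hi
  obtain ⟨m, hm, hmi⟩ := (mem_vars_iff_mem_support i).mp hi
  have hle : Finsupp.single i 1 ≤ m :=
    Finsupp.single_le_iff.mpr (Nat.one_le_iff_ne_zero.mpr (Finsupp.mem_support_iff.mp hmi))
  have hcoeff := coeff_pderiv (i := i) p (m - Finsupp.single i 1)
  rw [h, coeff_zero, tsub_add_cancel_of_le hle, eq_comm, mul_eq_zero] at hcoeff
  exact hcoeff.elim (mem_support_iff.mp hm) (Nat.cast_add_one_ne_zero _)

theorem eval_single_eq_constantCoeff_of_pderiv_eq_zero [DecidableEq σ] [NoZeroDivisors R]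
    [CharZero R] {i : σ} {p : MvPolynomial σ R} (h : pderiv i p = 0) (c : R) :
    eval (Pi.single i c) p = constantCoeff p :=
  eval₂Hom_eq_constantCoeff_of_vars (RingHom.id R) fun _ hk =>
    Pi.single_eq_of_ne (M := fun _ => R)
      (ne_of_mem_of_not_mem hk (notMem_vars_of_pderiv_eq_zero h)) c

theorem pderiv_ne_zero_of_gradient_vanishes_only_at_zero [NoZeroDivisors R] [CharZero R]
    {q : MvPolynomial σ R} (hq₀ : ∀ j, constantCoeff (pderiv j q) = 0)
    (hq : ∀ x : σ → R, (∀ j, eval x (pderiv j q) = 0) → x = 0) (i : σ) :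
    pderiv i q ≠ 0 := by
  classical
  intro hi
  have hsingle : Pi.single i (1 : R) = 0 := hq _ fun j => by
    rw [eval_single_eq_constantCoeff_of_pderiv_eq_zero (by rw [pderiv_comm, hi, map_zero]), hq₀]
  simpa using congrFun hsingle i

end PDeriv

section Weighted

variable {σ R : Type*} [CommSemiring R]

theorem pderiv_weightedHomogeneousComponent_add {M : Type*} [AddCancelCommMonoid M]
    (w : σ → M) (i : σ) (ℓ : M) (p : MvPolynomial σ R) :
    pderiv i (weightedHomogeneousComponent w (ℓ + w i) p) =
      weightedHomogeneousComponent w ℓ (pderiv i p) := by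
  classical
  ext m
  simp only [coeff_pderiv, coeff_weightedHomogeneousComponent, map_add, Finsupp.weight_single,
    one_smul, add_left_inj]
  split_ifs <;> simp

theorem constantCoeff_pderiv_weightedHomogeneousComponent {M : Type*} [AddCommMonoid M]
    (w : σ → M) (i : σ) (d : M) {p : MvPolynomial σ R} (hp : constantCoeff (pderiv i p) = 0) :
    constantCoeff (pderiv i (weightedHomogeneousComponent w d p)) = 0 := by
  classical
  rw [constantCoeff_pderiv, coeff_weightedHomogeneousComponent, ← constantCoeff_pderiv, hp,
    ite_self]

theorem weightedTotalDegree_pderiv_le (w : σ → ℕ) (i : σ) (p : MvPolynomial σ R) :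
    weightedTotalDegree w (pderiv i p) ≤ weightedTotalDegree w p - w i := by
  refine Finset.sup_le fun m hm => ?_
  rw [mem_support_iff, coeff_pderiv] at hm
  have hle := le_weightedTotalDegree w (mem_support_iff.mpr (left_ne_zero_of_mul hm))
  rw [map_add, Finsupp.weight_single, one_smul] at hle
  omega

theorem IsWeightedHomogeneous.le_of_pderiv_ne_zero {w : σ → ℕ} {d : ℕ} {p : MvPolynomial σ R}
    (hp : IsWeightedHomogeneous w p d) {i : σ} (h : pderiv i p ≠ 0) : w i ≤ d := by
  obtain ⟨m, hm⟩ := exists_coeff_ne_zero h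
  rw [coeff_pderiv] at hm
  have hweight := hp (left_ne_zero_of_mul hm)
  rw [map_add, Finsupp.weight_single, one_smul] at hweight
  omega

end Weighted

end MvPolynomial

section HigherPart

variable {n : ℕ}

theorem higherPart_eq_weightedHomogeneousComponent {s : Fin n → ℕ} {p : MvPolynomial (Fin n) ℝ}
    {ℓ : ℕ} (hle : weightedTotalDegree s p ≤ ℓ) (hne : weightedHomogeneousComponent s ℓ p ≠ 0) :
    higherPart s p = weightedHomogeneousComponent s ℓ p := by
  classical
  obtain ⟨m, hm⟩ := exists_coeff_ne_zero hne
  rw [coeff_weightedHomogeneousComponent, ne_eq, ite_eq_right_iff, Classical.not_imp] at hm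
  rw [higherPart, le_antisymm hle (hm.1 ▸ le_weightedTotalDegree s (mem_support_iff.mpr hm.2))]

theorem higherPart_neg (s : Fin n → ℕ) (p : MvPolynomial (Fin n) ℝ) :
    higherPart s (-p) = -higherPart s p := by
  rw [higherPart, higherPart, weightedTotalDegree, support_neg, map_neg, weightedTotalDegree]

theorem higherPart_pderiv {s : Fin n → ℕ} {p : MvPolynomial (Fin n) ℝ} {i : Fin n}
    (h : pderiv i (higherPart s p) ≠ 0) :
    higherPart s (pderiv i p) = pderiv i (higherPart s p) := by
  have hle : s i ≤ weightedTotalDegree s p :=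
    (weightedHomogeneousComponent_isWeightedHomogeneous _ p).le_of_pderiv_ne_zero h
  have hcomp : pderiv i (higherPart s p) =
      weightedHomogeneousComponent s (weightedTotalDegree s p - s i) (pderiv i p) := by
    rw [higherPart, ← pderiv_weightedHomogeneousComponent_add, Nat.sub_add_cancel hle]
  rw [hcomp] at h ⊢
  exact higherPart_eq_weightedHomogeneousComponent (weightedTotalDegree_pderiv_le s i p) h

theorem constantCoeff_pderiv_polyH {F : Fin n → MvPolynomial (Fin n) ℝ}
    (hF : ∀ i, constantCoeff (F i) = 0) (j : Fin n) :
    constantCoeff (pderiv j (polyH F)) = 0 := by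
  simp [polyH, hF]

end HigherPart

theorem stmt6_general {n : ℕ} (F : Fin n → MvPolynomial (Fin n) ℝ)
    (h0 : ∀ i, eval (0 : Fin n → ℝ) (F i) = 0)
    (s : Fin n → ℕ)
    (hgrad : ∀ x : Fin n → ℝ,
      (∀ i, eval x (pderiv i (higherPart s (polyH F))) = 0) → x = 0) :
    (∀ i, pderiv i (higherPart s (polyH F)) ≠ 0) ∧
    (∀ i, higherPart s (gradField F i) = - pderiv i (higherPart s (polyH F))) ∧
    (∀ x : Fin n → ℝ, (∀ i, eval x (higherPart s (gradField F i)) = 0) → x = 0) := by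
  have hF : ∀ i, constantCoeff (F i) = 0 := fun i => by rw [← eval_zero]; exact h0 i
  have hne : ∀ i, pderiv i (higherPart s (polyH F)) ≠ 0 :=
    pderiv_ne_zero_of_gradient_vanishes_only_at_zero
      (fun j => constantCoeff_pderiv_weightedHomogeneousComponent s j _
        (constantCoeff_pderiv_polyH hF j))
      hgrad
  have hY : ∀ i, higherPart s (gradField F i) = -pderiv i (higherPart s (polyH F)) := fun i => by
    rw [gradField, higherPart_neg, higherPart_pderiv (hne i)]
  exact ⟨hne, hY, fun x hx => hgrad x fun i => by simpa [hY] using hx i⟩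

/-- if the gradient of the higher `s`-quasi-homogeneous term `H_s` of
`H` vanishes only at the origin, then no `∂H_s/∂xᵢ` is the zero polynomial, the higher
`s`-quasi-homogeneous part of `Y = -∇H` equals `-∇H_s`, and in particular it vanishes
only at the origin. -/
theorem stmt6 {n : ℕ} (F : Fin n → MvPolynomial (Fin n) ℝ)
    (h0 : ∀ i, eval (0 : Fin n → ℝ) (F i) = 0)
    (hdet : ∀ x : Fin n → ℝ, jacDet F x ≠ 0)
    (s : Fin n → ℕ) (hs : ∀ i, 0 < s i)
    (hgrad : ∀ x : Fin n → ℝ,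
      (∀ i, eval x (pderiv i (higherPart s (polyH F))) = 0) → x = 0) :
    (∀ i, pderiv i (higherPart s (polyH F)) ≠ 0) ∧
    (∀ i, higherPart s (gradField F i) = - pderiv i (higherPart s (polyH F))) ∧
    (∀ x : Fin n → ℝ, (∀ i, eval x (higherPart s (gradField F i)) = 0) → x = 0) :=
  stmt6_general F h0 s hgrad
end

section
/- Let F=(f₁,…,fₙ):ℝⁿ→ℝⁿ be a polynomial map satisfying F(0)=0 and det DF(x)≠0 for all x∈ℝⁿ, and let H(x)=‖F(x)‖₂²/2. If ‖F(x)‖₂ → +∞ as ‖x‖₂ → +∞, then the origin is the unique point of ℝⁿ at which the gradient ∇H=(∂H/∂x₁,…,∂H/∂xₙ) vanishes; i.e., the origin is the unique singular point of the gradient vector field Y=(−∂H/∂x₁,…,−∂H/∂xₙ). -/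
open MvPolynomial Filter

noncomputable def euclidNorm {n : ℕ} (x : Fin n → ℝ) : ℝ :=
  Real.sqrt (∑ i, x i ^ 2)

/-! The gradient of `H` at `x` is `DF(x)ᵀ F(x)`, so it vanishes exactly where `F` does. Since
`DF` is everywhere invertible and `‖F‖ → ∞`, `F` is a proper local homeomorphism of `ℝⁿ`, hence a
covering map; as `ℝⁿ` is simply connected, `F` is injective, so `0` is its only zero. -/

open Function

section Covering

variable {E X : Type*} [TopologicalSpace E] [TopologicalSpace X] {f : E → X}

theorem IsLocalHomeomorph.isCoveringMap_of_isProperMap [T2Space E] (hf : IsLocalHomeomorph f)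
    (hp : IsProperMap f) : IsCoveringMap f := by
  rw [isCoveringMap_iff_isCoveringMapOn_univ]
  refine hp.isClosedMap.isCoveringMapOn_of_isLocalHomeomorphOn (fun x _ ↦ ?_)
    (isLocalHomeomorph_iff_isLocalHomeomorphOn_univ.mp hf)
  exact (hp.isCompact_preimage isCompact_singleton).finite
    (.of_openPartialHomeomorph f subset_rfl fun e _ ↦
      (hf e).imp fun _ ↦ And.imp_right Eq.symm)

theorem IsCoveringMap.injective [PreconnectedSpace E] [SimplyConnectedSpace X]
    [LocallyPathConnectedSpace X] (hf : IsCoveringMap f) : Injective f := by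
  intro e₀ e₁ h
  -- a section of `f` through `e₀` is a left inverse of `f`, by uniqueness of lifts
  obtain ⟨s, ⟨hs₀, hs⟩, -⟩ := hf.existsUnique_continuousMap_lifts (.id X) (f e₀) e₀ rfl
  have hsf : s ∘ f = id :=
    hf.eq_of_comp_eq (s.continuous.comp hf.continuous) continuous_id
      (by rw [← comp_assoc, hs]; rfl) e₀ hs₀
  calc e₀ = s (f e₀) := hs₀.symm
    _ = s (f e₁) := by rw [h]
    _ = e₁ := congrFun hsf e₁

end Covering

namespace MvPolynomial

variable {𝕜 σ : Type*} [NontriviallyNormedField 𝕜] [Fintype σ]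

noncomputable def evalFDeriv (p : MvPolynomial σ 𝕜) (x : σ → 𝕜) : (σ → 𝕜) →L[𝕜] 𝕜 :=
  ∑ i, eval x (pderiv i p) • ContinuousLinearMap.proj i

theorem evalFDeriv_apply (p : MvPolynomial σ 𝕜) (x v : σ → 𝕜) :
    evalFDeriv p x v = ∑ i, eval x (pderiv i p) * v i := by
  simp [evalFDeriv]

theorem hasFDerivAt_eval (p : MvPolynomial σ 𝕜) (x : σ → 𝕜) :
    HasFDerivAt (fun y ↦ eval y p) (evalFDeriv p x) x := by
  classical
  induction p using MvPolynomial.induction_on with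
  | C a =>
    have h : evalFDeriv (C a) x = 0 :=
      ContinuousLinearMap.ext fun v ↦ by simp [evalFDeriv_apply]
    simp only [eval_C, h]
    exact hasFDerivAt_const a x
  | add p q hp hq =>
    have h : evalFDeriv (p + q) x = evalFDeriv p x + evalFDeriv q x :=
      ContinuousLinearMap.ext fun v ↦ by
        simp [evalFDeriv_apply, add_mul, Finset.sum_add_distrib]
    simp only [map_add, h]
    exact hp.add hq
  | mul_X p i hp =>
    have h : evalFDeriv (p * X i) x =
        eval x p • ContinuousLinearMap.proj i + x i • evalFDeriv p x :=
      ContinuousLinearMap.ext fun v ↦ by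
        simp [evalFDeriv_apply, mul_add, Finset.sum_add_distrib, Pi.single_apply,
          apply_ite (eval x), Finset.mul_sum, mul_comm, mul_left_comm]
    simp only [eval_mul, eval_X, h]
    exact hp.mul (hasFDerivAt_apply i x)

end MvPolynomial

section PolynomialMap

variable {n : ℕ} (F : Fin n → MvPolynomial (Fin n) ℝ)

noncomputable def jacobianMatrix (x : Fin n → ℝ) : Matrix (Fin n) (Fin n) ℝ :=
  Matrix.of fun i j ↦ eval x (pderiv j (F i))

theorem isUnit_jacobianMatrix {x : Fin n → ℝ} (hx : jacDet F x ≠ 0) :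
    IsUnit (jacobianMatrix F x) :=
  (Matrix.isUnit_iff_isUnit_det _).2 (isUnit_iff_ne_zero.2 hx)

theorem hasFDerivAt_evalMap (x : Fin n → ℝ) :
    HasFDerivAt (evalMap F) (Matrix.toLin' (jacobianMatrix F x)).toContinuousLinearMap x := by
  refine hasFDerivAt_pi'.2 fun i ↦ (hasFDerivAt_eval (F i) x).congr_fderiv ?_
  refine ContinuousLinearMap.ext fun v ↦ ?_
  simp [evalFDeriv_apply, jacobianMatrix, Matrix.mulVec, dotProduct]

theorem contDiff_evalMap {k : WithTop ℕ∞} : ContDiff ℝ k (evalMap F) :=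
  contDiff_pi.2 fun i ↦ (AnalyticOnNhd.eval_mvPolynomial (F i)).contDiff

theorem isLocalHomeomorph_evalMap (hdet : ∀ x, jacDet F x ≠ 0) :
    IsLocalHomeomorph (evalMap F) := by
  intro x
  let _ := (isUnit_jacobianMatrix F (hdet x)).invertible
  let L := ((jacobianMatrix F x).toLinearEquiv' ‹_›).toContinuousLinearEquiv
  have hL : HasFDerivAt (evalMap F) (L : (Fin n → ℝ) →L[ℝ] (Fin n → ℝ)) x :=
    hasFDerivAt_evalMap F x
  exact ⟨(contDiff_evalMap F (k := 1)).contDiffAt.toOpenPartialHomeomorph _ hL one_ne_zero,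
    ContDiffAt.mem_toOpenPartialHomeomorph_source _ _ _, rfl⟩

theorem comap_euclidNorm_atTop :
    comap (euclidNorm (n := n)) atTop = cocompact (Fin n → ℝ) := by
  let e := (EuclideanSpace.equiv (Fin n) ℝ).symm.toHomeomorph
  have h : euclidNorm (n := n) = norm ∘ e := by
    ext x
    simp [euclidNorm, e, EuclideanSpace.norm_eq]
  rw [h, ← comap_comap, comap_norm_atTop, Metric.cobounded_eq_cocompact, e.comap_cocompact]

theorem isProperMap_evalMap
    (hinf : Tendsto (fun x ↦ euclidNorm (evalMap F x)) (comap euclidNorm atTop) atTop) :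
    IsProperMap (evalMap F) := by
  refine isProperMap_iff_tendsto_cocompact.2 ⟨(contDiff_evalMap F (k := 0)).continuous, ?_⟩
  rw [← comap_euclidNorm_atTop, tendsto_comap_iff]
  exact hinf

theorem eval_pderiv_polyH (x : Fin n → ℝ) (i : Fin n) :
    eval x (pderiv i (polyH F)) = Matrix.vecMul (evalMap F x) (jacobianMatrix F x) i := by
  simp [polyH, Matrix.vecMul, dotProduct, evalMap, jacobianMatrix, Finset.mul_sum]

theorem gradient_polyH_eq_zero_iff {x : Fin n → ℝ} (hx : jacDet F x ≠ 0) :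
    (∀ i, eval x (pderiv i (polyH F)) = 0) ↔ evalMap F x = 0 := by
  simp only [eval_pderiv_polyH, ← funext_iff, Pi.zero_def]
  exact (Matrix.vecMul_injective_iff_isUnit.2 (isUnit_jacobianMatrix F hx)).eq_iff'
    (Matrix.zero_vecMul _)

theorem evalMap_injective (hdet : ∀ x, jacDet F x ≠ 0)
    (hinf : Tendsto (fun x ↦ euclidNorm (evalMap F x)) (comap euclidNorm atTop) atTop) :
    Injective (evalMap F) :=
  ((isLocalHomeomorph_evalMap F hdet).isCoveringMap_of_isProperMap
    (isProperMap_evalMap F hinf)).injective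

end PolynomialMap

/-- if `‖F x‖₂ → +∞` as `‖x‖₂ → +∞`, then the origin is the unique
point where the gradient `∇H` of `H = ‖F‖₂²/2` vanishes, i.e. the unique singular point
of the gradient vector field `Y = -∇H`. -/
theorem stmt8 {n : ℕ} (F : Fin n → MvPolynomial (Fin n) ℝ)
    (h0 : ∀ i, eval (0 : Fin n → ℝ) (F i) = 0)
    (hdet : ∀ x : Fin n → ℝ, jacDet F x ≠ 0)
    (hinf : Tendsto (fun x : Fin n → ℝ => euclidNorm (evalMap F x))
      (comap euclidNorm atTop) atTop) :
    ∀ x : Fin n → ℝ, (∀ i, eval x (pderiv i (polyH F)) = 0) ↔ x = 0 := by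
  intro x
  rw [gradient_polyH_eq_zero_iff F (hdet x)]
  exact (evalMap_injective F hdet hinf).eq_iff' (funext h0)
end

section
/- Let F=(f₁,…,fₙ):ℝⁿ→ℝⁿ be a polynomial map satisfying det DF(x)≠0 for all x∈ℝⁿ, let H(x)=‖F(x)‖₂²/2, and let Y=(−∂H/∂x₁,…,−∂H/∂xₙ). If q∈ℝⁿ satisfies F(q)=0, then the determinant of the Jacobian matrix of Y at q equals (−1)ⁿ·(det DF(q))²; in particular it is nonzero. -/
open MvPolynomial Filter

open scoped Matrix

/-!
At a zero `q` of `F` the second-order terms `fₖ · ∂ᵢ∂ⱼfₖ` of the Hessian of `H` vanish, so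
`DY(q) = -DF(q)ᵀ DF(q)`, whose determinant is `(-1)ⁿ (det DF(q))²`.
-/

noncomputable def jacMatrix {n : ℕ} (F : Fin n → MvPolynomial (Fin n) ℝ) (x : Fin n → ℝ) :
    Matrix (Fin n) (Fin n) ℝ :=
  Matrix.of fun i j => eval x (pderiv j (F i))

lemma det_jacMatrix {n : ℕ} (F : Fin n → MvPolynomial (Fin n) ℝ) (x : Fin n → ℝ) :
    (jacMatrix F x).det = jacDet F x :=
  rfl

lemma Matrix.det_neg_transpose_mul_self {m R : Type*} [Fintype m] [DecidableEq m] [CommRing R]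
    (A : Matrix m m R) :
    (-(Aᵀ * A)).det = (-1) ^ Fintype.card m * A.det ^ 2 := by
  rw [Matrix.det_neg, Matrix.det_mul, Matrix.det_transpose, sq]

lemma pderiv_polyH {n : ℕ} (F : Fin n → MvPolynomial (Fin n) ℝ) (i : Fin n) :
    pderiv i (polyH F) = ∑ k, F k * pderiv i (F k) := by
  have half_mul_two : (C (1 / 2 : ℝ) : MvPolynomial (Fin n) ℝ) * 2 = 1 := by
    rw [← map_ofNat C 2, ← C_mul]
    norm_num
  rw [polyH, pderiv_C_mul, map_sum, Finset.mul_sum]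
  refine Finset.sum_congr rfl fun k _ => ?_
  rw [sq, pderiv_mul]
  linear_combination (F k * pderiv i (F k)) * half_mul_two

lemma jacMatrix_gradField_of_eval_eq_zero {n : ℕ} (F : Fin n → MvPolynomial (Fin n) ℝ)
    {q : Fin n → ℝ} (hq : ∀ i, eval q (F i) = 0) :
    jacMatrix (gradField F) q = -((jacMatrix F q)ᵀ * jacMatrix F q) := by
  ext i j
  simp only [jacMatrix, gradField, pderiv_polyH, Matrix.of_apply, Matrix.neg_apply,
    Matrix.mul_apply, Matrix.transpose_apply, map_neg, map_sum, pderiv_mul, map_add, eval_mul,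
    hq, zero_mul, add_zero]
  exact congrArg Neg.neg (Finset.sum_congr rfl fun k _ => mul_comm _ _)

/-- at every zero `q` of `F`, the Jacobian determinant of the gradient
vector field `Y = -∇H` equals `(-1)ⁿ (det DF(q))²`, and in particular is nonzero. -/
theorem stmt10 {n : ℕ} (F : Fin n → MvPolynomial (Fin n) ℝ)
    (hdet : ∀ x : Fin n → ℝ, jacDet F x ≠ 0)
    (q : Fin n → ℝ) (hq : ∀ i, eval q (F i) = 0) :
    Matrix.det (Matrix.of fun i j => eval q (pderiv j (gradField F i)))
        = (-1 : ℝ) ^ n * (jacDet F q) ^ 2 ∧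
      Matrix.det (Matrix.of fun i j => eval q (pderiv j (gradField F i))) ≠ 0 := by
  have hY : (jacMatrix (gradField F) q).det = (-1 : ℝ) ^ n * jacDet F q ^ 2 := by
    rw [jacMatrix_gradField_of_eval_eq_zero F hq, Matrix.det_neg_transpose_mul_self,
      Fintype.card_fin, det_jacMatrix]
  refine ⟨hY, ?_⟩
  change (jacMatrix (gradField F) q).det ≠ 0
  rw [hY]
  exact mul_ne_zero (pow_ne_zero _ (by norm_num)) (pow_ne_zero _ (hdet q))
end

section
/- Let P ∈ ℝ[x₁,…,xₙ] be a polynomial. If there exists a weight vector s=(s₁,…,sₙ) of positive integers such that the higher s-quasi-homogeneous term P_d of P satisfies: P_d(x)=0 if and only if x=0, then |P(x)| → +∞ as ‖x‖₂ → +∞. -/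
open MvPolynomial Filter

lemma eval_wh_scale {n : ℕ} {s : Fin n → ℕ} {ℓ : ℕ}
    {Q : MvPolynomial (Fin n) ℝ} (hQ : Q.IsWeightedHomogeneous s ℓ)
    (t : ℝ) (u : Fin n → ℝ) :
    eval (fun i => t ^ s i * u i) Q = t ^ ℓ * eval u Q := by
  rw [eval_eq', eval_eq', Finset.mul_sum]
  apply Finset.sum_congr rfl
  intro m hm
  have hw : (Finsupp.weight s) m = ℓ := hQ (mem_support_iff.mp hm)
  have hsum : ∑ i, m i * s i = ℓ := by
    rw [← hw, Finsupp.weight_apply, Finsupp.sum_fintype]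
    · rfl
    · intro i; simp
  have : ∏ i, (t ^ s i * u i) ^ m i = t ^ ℓ * ∏ i, u i ^ m i := by
    rw [← hsum]
    simp only [mul_pow, ← pow_mul]
    rw [Finset.prod_mul_distrib, Finset.prod_pow_eq_pow_sum]
    congr 1
    · congr 1
      exact Finset.sum_congr rfl fun i _ => by ring_nf
  rw [this]; ring

lemma sum_components {n : ℕ} (s : Fin n → ℕ) (P : MvPolynomial (Fin n) ℝ) :
    P = ∑ ℓ ∈ Finset.range (weightedTotalDegree s P + 1),
      weightedHomogeneousComponent s ℓ P := by
  classical
  ext m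
  rw [coeff_sum]
  simp only [coeff_weightedHomogeneousComponent]
  rw [Finset.sum_ite_eq (Finset.range (weightedTotalDegree s P + 1)) _ (fun _ => coeff m P)]
  by_cases h : coeff m P = 0
  · simp [h]
  · rw [if_pos]
    rw [Finset.mem_range, Nat.lt_succ_iff]
    exact le_weightedTotalDegree s (mem_support_iff.mpr h)

/-- if for some positive weight vector `s` the higher
`s`-quasi-homogeneous term of `P` vanishes exactly at the origin, then
`|P(x)| → +∞` as `‖x‖₂ → +∞`. -/
theorem stmt14 {n : ℕ} (P : MvPolynomial (Fin n) ℝ)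
    (hs : ∃ s : Fin n → ℕ, (∀ i, 0 < s i) ∧
      ∀ x : Fin n → ℝ, eval x (higherPart s P) = 0 ↔ x = 0) :
    Tendsto (fun x : Fin n → ℝ => |eval x P|) (comap euclidNorm atTop) atTop := by
  obtain ⟨s, hspos, hvan⟩ := hs
  rcases Nat.eq_zero_or_pos n with hn | hn
  · subst hn
    have hbot : comap (euclidNorm (n := 0)) atTop = ⊥ := by
      rw [← Filter.empty_mem_iff_bot]
      refine mem_comap.mpr ⟨Set.Ici 1, Filter.mem_atTop 1, ?_⟩
      intro x hx
      simp only [Set.mem_preimage, Set.mem_Ici, euclidNorm] at hx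
      norm_num at hx
    rw [hbot]; exact tendsto_bot
  · have i0 : Fin n := ⟨0, hn⟩
    set d := weightedTotalDegree s P with hd
    set Pd := higherPart s P with hPddef
    have hPdh : Pd.IsWeightedHomogeneous s d :=
      weightedHomogeneousComponent_isWeightedHomogeneous d P
    set K : Set (Fin n → ℝ) := {u | ∑ i, u i ^ 2 = 1} with hKdef
    have hKc : IsCompact K := by
      apply Metric.isCompact_of_isClosed_isBounded
      · exact isClosed_eq (by continuity) continuous_const
      · apply Bornology.IsBounded.subset (Metric.isBounded_closedBall (x := (0 : Fin n → ℝ)) (r := 1))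
        intro u hu
        rw [Metric.mem_closedBall, dist_zero_right]
        refine (pi_norm_le_iff_of_nonneg zero_le_one).mpr fun i => ?_
        have h1 : u i ^ 2 ≤ 1 := by
          have := Finset.single_le_sum (f := fun i => u i ^ 2)
            (fun i _ => sq_nonneg (u i)) (Finset.mem_univ i)
          rw [hu] at this; exact this
        have := sq_abs (u i)
        rw [Real.norm_eq_abs]
        nlinarith [abs_nonneg (u i)]
    have hsing : (Pi.single i0 1 : Fin n → ℝ) ∈ K := by
      show (∑ i, (Pi.single i0 1 : Fin n → ℝ) i ^ 2) = 1
      rw [Finset.sum_eq_single i0]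
      · simp
      · intro j _ hj; simp [Pi.single_apply, hj]
      · simp
    have hKne : K.Nonempty := ⟨_, hsing⟩
    obtain ⟨u0, hu0K, hmin'⟩ := hKc.exists_isMinOn hKne
      ((continuous_eval Pd).abs.continuousOn)
    have hmin := isMinOn_iff.mp hmin'
    set c := |eval u0 Pd| with hcdef
    have hKnz : ∀ u ∈ K, eval u Pd ≠ 0 := by
      intro u huK h0
      have hu0 : u = 0 := (hvan u).mp h0
      rw [hu0] at huK
      simp only [hKdef, Set.mem_setOf_eq, Pi.zero_apply] at huK
      norm_num at huK
    have hcpos : 0 < c := abs_pos.mpr (hKnz u0 hu0K)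
    set G : (Fin n → ℝ) → ℝ := fun u =>
      ∑ ℓ ∈ Finset.range d, |eval u (weightedHomogeneousComponent s ℓ P)| with hGdef
    have hGcont : Continuous G :=
      continuous_finset_sum _ fun ℓ _ => (continuous_eval _).abs
    obtain ⟨u1, hu1K, hmax'⟩ := hKc.exists_isMaxOn hKne hGcont.continuousOn
    have hmax := isMaxOn_iff.mp hmax'
    set M := G u1 with hMdef
    have hM0 : 0 ≤ M := Finset.sum_nonneg fun _ _ => abs_nonneg _
    have hd1 : 1 ≤ d := by
      by_contra h
      push_neg at h
      have h0 : d = 0 := Nat.lt_one_iff.mp h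
      have hzero : (fun i : Fin n => (0:ℝ) ^ s i * u0 i) = (0 : Fin n → ℝ) := by
        funext i; simp [zero_pow (hspos i).ne']
      have hsc := eval_wh_scale hPdh 0 u0
      rw [hzero, h0, pow_zero, one_mul] at hsc
      have h1 : eval (0 : Fin n → ℝ) Pd = 0 := (hvan 0).mpr rfl
      exact hKnz u0 hu0K (by rw [← hsc, h1])
    obtain ⟨e, he⟩ : ∃ e, d = e + 1 := ⟨d - 1, by omega⟩
    set S := Finset.univ.sup s with hSdef
    have hsS : ∀ i, s i ≤ S := fun i => Finset.le_sup (Finset.mem_univ i)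
    have hS1 : 1 ≤ S := le_trans (hspos i0) (hsS i0)
    rw [tendsto_atTop]
    intro C
    set T := max 1 ((|C| + M + 1) / c) with hTdef
    have hT1 : (1:ℝ) ≤ T := le_max_left _ _
    have hTc : |C| + M + 1 ≤ T * c := by
      rw [← div_le_iff₀ hcpos]
      exact le_max_right _ _
    set R := max 1 (T ^ S) with hRdef
    rw [eventually_comap]
    filter_upwards [eventually_ge_atTop R] with y hy x hxy
    have hbR : R ≤ euclidNorm x := by rw [hxy]; exact hy
    have hbdef : euclidNorm x = Real.sqrt (∑ i, x i ^ 2) := rfl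
    set b := euclidNorm x with hb
    have hb1 : (1:ℝ) ≤ b := le_trans (le_max_left _ _) hbR
    have hsumnn : (0:ℝ) ≤ ∑ i, x i ^ 2 := Finset.sum_nonneg fun i _ => sq_nonneg _
    have hb2 : b ^ 2 = ∑ i, x i ^ 2 := by rw [hbdef]; exact Real.sq_sqrt hsumnn
    have hbne : b ≠ 0 := by linarith
    set g : ℝ → ℝ := fun t => ∑ i, x i ^ 2 / t ^ (2 * s i) with hgdef
    have hgc : ContinuousOn g (Set.Icc 1 b) := by
      apply continuousOn_finset_sum
      intro i _
      refine ContinuousOn.div continuousOn_const (continuous_pow _).continuousOn ?_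
      intro t ht
      exact pow_ne_zero _ (ne_of_gt (lt_of_lt_of_le zero_lt_one ht.1))
    have hg1 : 1 ≤ g 1 := by
      simp only [hgdef, one_pow, div_one]
      rw [← hb2]; nlinarith
    have hgb : g b ≤ 1 := by
      have hterm : ∀ i, x i ^ 2 / b ^ (2 * s i) ≤ x i ^ 2 / b ^ 2 := by
        intro i
        refine div_le_div_of_nonneg_left (sq_nonneg _) (by positivity) ?_
        exact pow_le_pow_right₀ hb1 (by have := hspos i; omega)
      calc g b ≤ ∑ i, x i ^ 2 / b ^ 2 := Finset.sum_le_sum fun i _ => hterm i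
        _ = (∑ i, x i ^ 2) / b ^ 2 := by rw [Finset.sum_div]
        _ = 1 := by rw [← hb2]; exact div_self (pow_ne_zero _ hbne)
    obtain ⟨t, htI, hgt⟩ := intermediate_value_Icc' hb1 hgc ⟨hgb, hg1⟩
    obtain ⟨ht1, htb⟩ := htI
    have ht0 : (0:ℝ) < t := lt_of_lt_of_le zero_lt_one ht1
    set u : Fin n → ℝ := fun i => x i / t ^ s i with hudef
    have htpow : ∀ i, (t:ℝ) ^ s i ≠ 0 := fun i => pow_ne_zero _ ht0.ne'
    have hxu : ∀ i, x i = t ^ s i * u i := by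
      intro i; rw [hudef]; field_simp
    have husq : ∀ i, u i ^ 2 = x i ^ 2 / t ^ (2 * s i) := by
      intro i
      rw [hudef]
      rw [div_pow, ← pow_mul, mul_comm (s i) 2]
    have huK : u ∈ K := by
      show (∑ i, u i ^ 2) = 1
      rw [← hgt]
      exact Finset.sum_congr rfl fun i _ => husq i
    have huKsum : (∑ i, u i ^ 2) = 1 := huK
    have hbt : b ≤ t ^ S := by
      have h1 : b ^ 2 ≤ (t ^ S) ^ 2 := by
        rw [hb2]
        calc ∑ i, x i ^ 2 = ∑ i, t ^ (2 * s i) * u i ^ 2 := by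
              refine Finset.sum_congr rfl fun i _ => ?_
              rw [hxu i, mul_pow, ← pow_mul, mul_comm (s i) 2]
          _ ≤ ∑ i, t ^ (2 * S) * u i ^ 2 := by
              refine Finset.sum_le_sum fun i _ => ?_
              exact mul_le_mul_of_nonneg_right
                (pow_le_pow_right₀ ht1 (by have := hsS i; omega)) (sq_nonneg _)
          _ = t ^ (2 * S) := by rw [← Finset.mul_sum, huKsum, mul_one]
          _ = (t ^ S) ^ 2 := by rw [← pow_mul, mul_comm]
      have := Real.sqrt_le_sqrt h1
      rwa [Real.sqrt_sq (by linarith), Real.sqrt_sq (by positivity)] at this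
    have hTS : T ^ S ≤ b := le_trans (le_max_right 1 (T ^ S)) hbR
    have htT : T ≤ t := by
      by_contra h
      push_neg at h
      have hlt : t ^ S < T ^ S := pow_lt_pow_left₀ h ht0.le (by omega)
      linarith
    have hx_eq : x = fun i => t ^ s i * u i := funext hxu
    have heval : eval x P =
        (∑ ℓ ∈ Finset.range d, t ^ ℓ * eval u (weightedHomogeneousComponent s ℓ P))
          + t ^ d * eval u Pd := by
      conv_lhs => rw [sum_components s P]
      rw [map_sum, ← hd, Finset.sum_range_succ]
      congr 1
      · refine Finset.sum_congr rfl fun ℓ _ => ?_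
        rw [hx_eq]
        exact eval_wh_scale (weightedHomogeneousComponent_isWeightedHomogeneous _ P) t u
      · rw [hx_eq]
        exact eval_wh_scale hPdh t u
    have hlowsum :
        |∑ ℓ ∈ Finset.range d, t ^ ℓ * eval u (weightedHomogeneousComponent s ℓ P)|
          ≤ t ^ e * M := by
      calc |∑ ℓ ∈ Finset.range d, t ^ ℓ * eval u (weightedHomogeneousComponent s ℓ P)|
          ≤ ∑ ℓ ∈ Finset.range d, |t ^ ℓ * eval u (weightedHomogeneousComponent s ℓ P)| :=
            Finset.abs_sum_le_sum_abs _ _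
        _ = ∑ ℓ ∈ Finset.range d, t ^ ℓ * |eval u (weightedHomogeneousComponent s ℓ P)| := by
            refine Finset.sum_congr rfl fun ℓ _ => ?_
            rw [abs_mul, abs_pow, abs_of_nonneg ht0.le]
        _ ≤ ∑ ℓ ∈ Finset.range d, t ^ e * |eval u (weightedHomogeneousComponent s ℓ P)| := by
            refine Finset.sum_le_sum fun ℓ hℓ => ?_
            refine mul_le_mul_of_nonneg_right (pow_le_pow_right₀ ht1 ?_) (abs_nonneg _)
            have := Finset.mem_range.mp hℓ; omega
        _ = t ^ e * G u := by rw [hGdef, Finset.mul_sum]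
        _ ≤ t ^ e * M := mul_le_mul_of_nonneg_left (hmax u huK) (pow_nonneg ht0.le _)
    have hcu : c ≤ |eval u Pd| := hmin u huK
    have hhigh : t ^ d * c ≤ |t ^ d * eval u Pd| := by
      rw [abs_mul, abs_pow, abs_of_nonneg ht0.le]
      exact mul_le_mul_of_nonneg_left hcu (pow_nonneg ht0.le _)
    have key : t ^ d * c - t ^ e * M ≤ |eval x P| := by
      rw [heval]
      have h3 := abs_sub_abs_le_abs_sub (t ^ d * eval u Pd)
        (-(∑ ℓ ∈ Finset.range d, t ^ ℓ * eval u (weightedHomogeneousComponent s ℓ P)))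
      rw [abs_neg, sub_neg_eq_add, add_comm (t ^ d * eval u Pd)] at h3
      linarith
    have hte : (1:ℝ) ≤ t ^ e := by
      calc (1:ℝ) = 1 ^ e := (one_pow e).symm
        _ ≤ t ^ e := pow_le_pow_left₀ zero_le_one ht1 e
    have h4 : |C| + 1 ≤ t * c - M := by
      have : T * c ≤ t * c := mul_le_mul_of_nonneg_right htT hcpos.le
      linarith
    have h5 : 1 * (t * c - M) ≤ t ^ e * (t * c - M) :=
      mul_le_mul_of_nonneg_right hte (by linarith [abs_nonneg C])
    have h6 : t ^ d * c - t ^ e * M = t ^ e * (t * c - M) := by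
      rw [he, pow_succ]; ring
    have h7 := le_abs_self C
    linarith
end

section
/- Consider the polynomial map F=(f,g):ℝ²→ℝ² with f(x,y)=x³+y³+x and g(x,y)=y, and let H=(f²+g²)/2. Then: (a) det DF(x,y)=3x²+1≠0 for all (x,y)∈ℝ²; (b) the higher homogeneous part (x³+y³, y) of F vanishes only at the origin in ℝ²; and (c) for every weight vector s=(s₁,s₂) of positive integers, the higher s-quasi-homogeneous term H_s of H has a real zero (x,y)≠(0,0). -/
open MvPolynomial Filter

lemma weight_sd (w : Fin 2 → ℕ) (a b : ℕ) :
    Finsupp.weight w (Finsupp.single 0 a + Finsupp.single 1 b) = a * w 0 + b * w 1 := by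
  rw [map_add]
  simp [Finsupp.weight_apply, Finsupp.sum_single_index, mul_comm]

lemma iwh_X_pow {n : ℕ} (w : Fin n → ℕ) (i : Fin n) (a : ℕ) :
    IsWeightedHomogeneous w (X i ^ a : MvPolynomial (Fin n) ℝ) (a * w i) := by
  rw [X_pow_eq_monomial]
  exact isWeightedHomogeneous_monomial _ _ _
    (by simp [Finsupp.weight_apply, Finsupp.sum_single_index, mul_comm])

lemma iwh_term (w : Fin 2 → ℕ) (c : ℝ) (a b D : ℕ) (h : a * w 0 + b * w 1 = D) :
    IsWeightedHomogeneous w (C c * X 0 ^ a * X 1 ^ b : MvPolynomial (Fin 2) ℝ) D := by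
  subst h
  have := ((isWeightedHomogeneous_C w c).mul (iwh_X_pow w 0 a)).mul (iwh_X_pow w 1 b)
  simpa using this

lemma term_supp (w : Fin 2 → ℕ) (c : ℝ) (a b : ℕ) {D : ℕ} (h : a * w 0 + b * w 1 < D) :
    ∀ d ∈ (C c * X 0 ^ a * X 1 ^ b : MvPolynomial (Fin 2) ℝ).support,
      Finsupp.weight w d < D := by
  intro d hd
  have h1 : (C c * X 0 ^ a * X 1 ^ b : MvPolynomial (Fin 2) ℝ)
      = monomial (Finsupp.single 0 a + Finsupp.single 1 b) c := by
    simp [X_pow_eq_monomial, monomial_mul, C_mul_monomial]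
  rw [h1] at hd
  have h2 := support_monomial_subset hd
  simp only [Finset.mem_singleton] at h2
  subst h2
  rw [weight_sd]
  exact h

lemma add_supp {n : ℕ} {w : Fin n → ℕ} {D : ℕ} {q1 q2 : MvPolynomial (Fin n) ℝ}
    (h1 : ∀ d ∈ q1.support, Finsupp.weight w d < D)
    (h2 : ∀ d ∈ q2.support, Finsupp.weight w d < D) :
    ∀ d ∈ (q1 + q2).support, Finsupp.weight w d < D := fun d hd =>
  (Finset.mem_union.mp (MvPolynomial.support_add hd)).elim (h1 d) (h2 d)

lemma higher_aux {n : ℕ} {w : Fin n → ℕ} {p q : MvPolynomial (Fin n) ℝ} {D : ℕ}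
    (hp : IsWeightedHomogeneous w p D) (hp0 : p ≠ 0)
    (hq : ∀ d ∈ q.support, Finsupp.weight w d < D) :
    weightedTotalDegree w (p + q) = D ∧
      weightedHomogeneousComponent w D (p + q) = p := by
  have hdeg : weightedTotalDegree w (p + q) = D := by
    apply le_antisymm
    · apply Finset.sup_le
      intro d hd
      rw [mem_support_iff] at hd
      by_cases hdp : coeff d p = 0
      · have hne : coeff d q ≠ 0 := by
          intro h0
          apply hd
          rw [coeff_add, hdp, h0, add_zero]
        exact le_of_lt (hq d (mem_support_iff.mpr hne))
      · exact le_of_eq (hp hdp)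
    · obtain ⟨d, hd⟩ := ne_zero_iff.mp hp0
      have hwd : Finsupp.weight w d = D := hp hd
      have hdq : coeff d q = 0 := by
        by_contra h
        exact absurd hwd (ne_of_lt (hq d (mem_support_iff.mpr h)))
      have hmem : d ∈ (p + q).support := by
        rw [mem_support_iff, coeff_add, hdq, add_zero]; exact hd
      calc D = Finsupp.weight w d := hwd.symm
        _ ≤ _ := le_weightedTotalDegree w hmem
  refine ⟨hdeg, ?_⟩
  rw [map_add, hp.weightedHomogeneousComponent_same,
    weightedHomogeneousComponent_eq_zero' _ _ (fun d hd => ne_of_lt (hq d hd)), add_zero]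

/-- for `F = (x³ + y³ + x, y)` and `H = (f² + g²)/2`:
(a) `det DF = 3x² + 1 ≠ 0` everywhere; (b) the higher homogeneous part
`(x³ + y³, y)` of `F` vanishes only at the origin; (c) for every positive weight
vector `s`, the higher `s`-quasi-homogeneous term of `H` has a nontrivial real zero. -/
theorem stmt15 (f g H : MvPolynomial (Fin 2) ℝ)
    (hf : f = X 0 ^ 3 + X 1 ^ 3 + X 0) (hg : g = X 1)
    (hH : H = C (1 / 2 : ℝ) * (f ^ 2 + g ^ 2)) :
    (∀ x : Fin 2 → ℝ, jacDet ![f, g] x = 3 * (x 0) ^ 2 + 1 ∧ jacDet ![f, g] x ≠ 0) ∧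
    (homogeneousComponent f.totalDegree f = X 0 ^ 3 + X 1 ^ 3 ∧
      homogeneousComponent g.totalDegree g = X 1 ∧
      ∀ x : Fin 2 → ℝ,
        (eval x (homogeneousComponent f.totalDegree f) = 0 ∧
          eval x (homogeneousComponent g.totalDegree g) = 0) → x = 0) ∧
    (∀ s : Fin 2 → ℕ, (∀ i, 0 < s i) →
      ∃ x : Fin 2 → ℝ, x ≠ 0 ∧ eval x (higherPart s H) = 0) := by
  subst hf hg hH
  refine ⟨?_, ?_, ?_⟩
  · -- part (a)
    intro x
    have hdet : jacDet ![X 0 ^ 3 + X 1 ^ 3 + X 0, X 1] x = 3 * (x 0) ^ 2 + 1 := by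
      simp [jacDet, Matrix.det_fin_two]
    refine ⟨hdet, ?_⟩
    rw [hdet]
    positivity
  · -- part (b)
    have hf3 : (X 0 ^ 3 + X 1 ^ 3 + X 0 : MvPolynomial (Fin 2) ℝ).totalDegree = 3 ∧
        homogeneousComponent 3 (X 0 ^ 3 + X 1 ^ 3 + X 0 : MvPolynomial (Fin 2) ℝ)
          = X 0 ^ 3 + X 1 ^ 3 := by
      have hp : IsWeightedHomogeneous (1 : Fin 2 → ℕ)
          (X 0 ^ 3 + X 1 ^ 3 : MvPolynomial (Fin 2) ℝ) 3 := by
        have h1 := iwh_X_pow (1 : Fin 2 → ℕ) 0 3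
        have h2 := iwh_X_pow (1 : Fin 2 → ℕ) 1 3
        simp only [Pi.one_apply, mul_one] at h1 h2
        exact h1.add h2
      have hp0 : (X 0 ^ 3 + X 1 ^ 3 : MvPolynomial (Fin 2) ℝ) ≠ 0 := by
        intro h
        have := congrArg (eval (fun _ => (1 : ℝ))) h
        simp at this
      have hq : ∀ d ∈ (X 0 : MvPolynomial (Fin 2) ℝ).support,
          Finsupp.weight (1 : Fin 2 → ℕ) d < 3 := by
        have := term_supp (1 : Fin 2 → ℕ) 1 1 0 (D := 3) (by norm_num)
        simpa using this
      have := higher_aux hp hp0 hq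
      rw [← weightedTotalDegree_one]
      exact ⟨this.1, by rw [homogeneousComponent]; exact this.2⟩
    have hg1 : (X 1 : MvPolynomial (Fin 2) ℝ).totalDegree = 1 ∧
        homogeneousComponent 1 (X 1 : MvPolynomial (Fin 2) ℝ) = X 1 := by
      have hp : IsWeightedHomogeneous (1 : Fin 2 → ℕ) (X 1 : MvPolynomial (Fin 2) ℝ) 1 := by
        have := iwh_X_pow (1 : Fin 2 → ℕ) 1 1
        simpa using this
      have hp0 : (X 1 : MvPolynomial (Fin 2) ℝ) ≠ 0 := X_ne_zero 1
      have := higher_aux (q := 0) hp hp0 (by simp)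
      rw [add_zero] at this
      rw [← weightedTotalDegree_one]
      exact ⟨this.1, by rw [homogeneousComponent]; exact this.2⟩
    rw [hf3.1, hg1.1, hf3.2, hg1.2]
    refine ⟨rfl, rfl, ?_⟩
    intro x ⟨h1, h2⟩
    simp only [eval_add, eval_pow, eval_X] at h1 h2
    rw [h2] at h1
    simp only [ne_eq, OfNat.ofNat_ne_zero, not_false_eq_true, zero_pow, add_zero] at h1
    have hx0 : x 0 = 0 := by
      have := pow_eq_zero_iff (n := 3) (by norm_num) |>.mp h1
      exact this
    funext i
    fin_cases i <;> simp [hx0, h2]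
  · -- part (c)
    intro s hs
    have hs0 := hs 0
    have hs1 := hs 1
    -- master decomposition of H into canonical terms
    have hC2 : (C (1 / 2 : ℝ) * 2 : MvPolynomial (Fin 2) ℝ) = C 1 := by
      rw [← map_ofNat (C : ℝ →+* MvPolynomial (Fin 2) ℝ) 2, ← map_mul]
      norm_num
    have hmaster : C (1 / 2 : ℝ) * ((X 0 ^ 3 + X 1 ^ 3 + X 0 : MvPolynomial (Fin 2) ℝ) ^ 2
          + X 1 ^ 2)
        = C (1/2 : ℝ) * X 0 ^ 6 * X 1 ^ 0 + C (1 : ℝ) * X 0 ^ 3 * X 1 ^ 3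
          + C (1/2 : ℝ) * X 0 ^ 0 * X 1 ^ 6 + C (1 : ℝ) * X 0 ^ 4 * X 1 ^ 0
          + C (1 : ℝ) * X 0 ^ 1 * X 1 ^ 3 + C (1/2 : ℝ) * X 0 ^ 2 * X 1 ^ 0
          + C (1/2 : ℝ) * X 0 ^ 0 * X 1 ^ 2 := by
      linear_combination (X 0 ^ 3 * X 1 ^ 3 + X 0 ^ 4 + X 0 * X 1 ^ 3
        : MvPolynomial (Fin 2) ℝ) * hC2
    rcases lt_trichotomy (s 0) (s 1) with hlt | heq | hgt
    · -- s 0 < s 1 : top term is (1/2) y^6, zero at (1,0)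
      refine ⟨![1, 0], ?_, ?_⟩
      · intro h
        have := congrFun h 0
        norm_num at this
      · have key := higher_aux (w := s) (D := 6 * s 1)
          (p := C (1/2 : ℝ) * X 0 ^ 0 * X 1 ^ 6)
          (q := C (1/2 : ℝ) * X 0 ^ 6 * X 1 ^ 0 + C (1 : ℝ) * X 0 ^ 3 * X 1 ^ 3
            + C (1 : ℝ) * X 0 ^ 4 * X 1 ^ 0 + C (1 : ℝ) * X 0 ^ 1 * X 1 ^ 3
            + C (1/2 : ℝ) * X 0 ^ 2 * X 1 ^ 0 + C (1/2 : ℝ) * X 0 ^ 0 * X 1 ^ 2)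
          (iwh_term s (1/2) 0 6 _ (by omega))
          (by
            intro h
            have := congrArg (eval (fun _ => (1 : ℝ))) h
            norm_num at this)
          (add_supp (add_supp (add_supp (add_supp (add_supp
            (term_supp s (1/2) 6 0 (by omega)) (term_supp s 1 3 3 (by omega)))
            (term_supp s 1 4 0 (by omega))) (term_supp s 1 1 3 (by omega)))
            (term_supp s (1/2) 2 0 (by omega))) (term_supp s (1/2) 0 2 (by omega)))
        have hHe : C (1 / 2 : ℝ) * ((X 0 ^ 3 + X 1 ^ 3 + X 0 : MvPolynomial (Fin 2) ℝ) ^ 2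
            + X 1 ^ 2) = (C (1/2 : ℝ) * X 0 ^ 0 * X 1 ^ 6)
            + (C (1/2 : ℝ) * X 0 ^ 6 * X 1 ^ 0 + C (1 : ℝ) * X 0 ^ 3 * X 1 ^ 3
            + C (1 : ℝ) * X 0 ^ 4 * X 1 ^ 0 + C (1 : ℝ) * X 0 ^ 1 * X 1 ^ 3
            + C (1/2 : ℝ) * X 0 ^ 2 * X 1 ^ 0 + C (1/2 : ℝ) * X 0 ^ 0 * X 1 ^ 2) := by
          rw [hmaster]; ring
        rw [higherPart, hHe, key.1, key.2]
        simp only [eval_add, eval_mul, eval_pow, eval_C, eval_X, Matrix.cons_val_zero,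
          Matrix.cons_val_one, Matrix.head_cons]
        norm_num
    · -- s 0 = s 1 : top term is (1/2)(x³+y³)², zero at (1,-1)
      refine ⟨![1, -1], ?_, ?_⟩
      · intro h
        have := congrFun h 0
        norm_num at this
      · have key := higher_aux (w := s) (D := 6 * s 0)
          (p := C (1/2 : ℝ) * X 0 ^ 6 * X 1 ^ 0 + C (1 : ℝ) * X 0 ^ 3 * X 1 ^ 3
            + C (1/2 : ℝ) * X 0 ^ 0 * X 1 ^ 6)
          (q := C (1 : ℝ) * X 0 ^ 4 * X 1 ^ 0 + C (1 : ℝ) * X 0 ^ 1 * X 1 ^ 3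
            + C (1/2 : ℝ) * X 0 ^ 2 * X 1 ^ 0 + C (1/2 : ℝ) * X 0 ^ 0 * X 1 ^ 2)
          (((iwh_term s (1/2) 6 0 _ (by omega)).add (iwh_term s 1 3 3 _ (by omega))).add
            (iwh_term s (1/2) 0 6 _ (by omega)))
          (by
            intro h
            have := congrArg (eval ![(1 : ℝ), 0]) h
            simp only [eval_add, eval_mul, eval_pow, eval_C, eval_X, Matrix.cons_val_zero,
              Matrix.cons_val_one, Matrix.head_cons, map_zero] at this
            norm_num at this)
          (add_supp (add_supp (add_supp
            (term_supp s 1 4 0 (by omega)) (term_supp s 1 1 3 (by omega)))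
            (term_supp s (1/2) 2 0 (by omega))) (term_supp s (1/2) 0 2 (by omega)))
        have hHe : C (1 / 2 : ℝ) * ((X 0 ^ 3 + X 1 ^ 3 + X 0 : MvPolynomial (Fin 2) ℝ) ^ 2
            + X 1 ^ 2) = (C (1/2 : ℝ) * X 0 ^ 6 * X 1 ^ 0 + C (1 : ℝ) * X 0 ^ 3 * X 1 ^ 3
            + C (1/2 : ℝ) * X 0 ^ 0 * X 1 ^ 6)
            + (C (1 : ℝ) * X 0 ^ 4 * X 1 ^ 0 + C (1 : ℝ) * X 0 ^ 1 * X 1 ^ 3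
            + C (1/2 : ℝ) * X 0 ^ 2 * X 1 ^ 0 + C (1/2 : ℝ) * X 0 ^ 0 * X 1 ^ 2) := by
          rw [hmaster]; ring
        rw [higherPart, hHe, key.1, key.2]
        simp only [eval_add, eval_mul, eval_pow, eval_C, eval_X, Matrix.cons_val_zero,
          Matrix.cons_val_one, Matrix.head_cons]
        norm_num
    · -- s 1 < s 0 : top term is (1/2) x^6, zero at (0,1)
      refine ⟨![0, 1], ?_, ?_⟩
      · intro h
        have := congrFun h 1
        norm_num at this
      · have key := higher_aux (w := s) (D := 6 * s 0)
          (p := C (1/2 : ℝ) * X 0 ^ 6 * X 1 ^ 0)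
          (q := C (1 : ℝ) * X 0 ^ 3 * X 1 ^ 3 + C (1/2 : ℝ) * X 0 ^ 0 * X 1 ^ 6
            + C (1 : ℝ) * X 0 ^ 4 * X 1 ^ 0 + C (1 : ℝ) * X 0 ^ 1 * X 1 ^ 3
            + C (1/2 : ℝ) * X 0 ^ 2 * X 1 ^ 0 + C (1/2 : ℝ) * X 0 ^ 0 * X 1 ^ 2)
          (iwh_term s (1/2) 6 0 _ (by omega))
          (by
            intro h
            have := congrArg (eval (fun _ => (1 : ℝ))) h
            norm_num at this)
          (add_supp (add_supp (add_supp (add_supp (add_supp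
            (term_supp s 1 3 3 (by omega)) (term_supp s (1/2) 0 6 (by omega)))
            (term_supp s 1 4 0 (by omega))) (term_supp s 1 1 3 (by omega)))
            (term_supp s (1/2) 2 0 (by omega))) (term_supp s (1/2) 0 2 (by omega)))
        have hHe : C (1 / 2 : ℝ) * ((X 0 ^ 3 + X 1 ^ 3 + X 0 : MvPolynomial (Fin 2) ℝ) ^ 2
            + X 1 ^ 2) = (C (1/2 : ℝ) * X 0 ^ 6 * X 1 ^ 0)
            + (C (1 : ℝ) * X 0 ^ 3 * X 1 ^ 3 + C (1/2 : ℝ) * X 0 ^ 0 * X 1 ^ 6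
            + C (1 : ℝ) * X 0 ^ 4 * X 1 ^ 0 + C (1 : ℝ) * X 0 ^ 1 * X 1 ^ 3
            + C (1/2 : ℝ) * X 0 ^ 2 * X 1 ^ 0 + C (1/2 : ℝ) * X 0 ^ 0 * X 1 ^ 2) := by
          rw [hmaster]; ring
        rw [higherPart, hHe, key.1, key.2]
        simp only [eval_add, eval_mul, eval_pow, eval_C, eval_X, Matrix.cons_val_zero,
          Matrix.cons_val_one, Matrix.head_cons]
        norm_num
end
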